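/- For 3-periodic billiard orbits in the ellipse x²/a² + y²/b² = 1, Joachimsthal's constant equals J = √(2δ − a² − b²)/c², where δ = √(a⁴ − a²b² + b⁴) and c² = a² − b². -/

import Mathlib

/-!
For the form `B(u, v) = u₁v₁/a² + u₂v₂/b²` the ellipse is the unit circle, and for a chord `pq`
one has `½∇f(p) · (q - p)/|q - p| = -B(q - p, q - p)/(2|q - p|)`. This is symmetric in `p, q`,
so the reflection law gives the three sides of the orbit a common constant `J`, and sides of
lengths `x, y, z` have `B`-squared lengths `2Jx, 2Jy, 2Jz`.

Write `heron` for sixteen times the squared area in terms of the squared sides. As the orbit is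
inscribed in the unit `B`-circle, `heron (2Jx) (2Jy) (2Jz) = 8J³xyz`. Moreover `|v|² - b²B(v, v)`
and `|v|² - a²B(v, v)` are multiples of `v₁²` and `v₂²`, so the triangles with these squared
sides are the (degenerate) projections of the orbit to the axes and have `heron = 0`.
Eliminating the sides yields `J (x + y + z) = 3 + (a² + b²)J²` and then
`(a² - b²)²J⁴ + 2(a² + b²)J² - 3 = 0`, whose positive root is the stated closed form.
-/

noncomputable section

namespace BilliardInv

/-- A point of the plane. -/
abbrev Pt := ℝ × ℝ

/-- Euclidean dot product. -/
def dot (p q : Pt) : ℝ := p.1 * q.1 + p.2 * q.2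

/-- Euclidean distance. -/
def dst (p q : Pt) : ℝ := Real.sqrt ((p.1 - q.1) ^ 2 + (p.2 - q.2) ^ 2)

/-- Membership in the ellipse x²/a² + y²/b² = 1. -/
def onEllipse (a b : ℝ) (p : Pt) : Prop := p.1 ^ 2 / a ^ 2 + p.2 ^ 2 / b ^ 2 = 1

/-- Half the gradient of f(x,y) = x²/a² + y²/b² (an outward normal direction). -/
def nrm (a b : ℝ) (p : Pt) : Pt := (p.1 / a ^ 2, p.2 / b ^ 2)

/-- Unit vector pointing from `v` toward `q`. -/
def udir (v q : Pt) : Pt := (dst v q)⁻¹ • (q - v)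

/-- The billiard reflection law at vertex `v` with neighboring vertices `q`, `r`:
the two adjacent sides make equal angles with the ellipse normal at `v`. -/
def reflectAt (a b : ℝ) (q v r : Pt) : Prop :=
  dot (udir v q) (nrm a b v) = dot (udir v r) (nrm a b v)

/-- A 3-periodic billiard orbit in the ellipse with semi-axes `a > b > 0`:
a nondegenerate triangle inscribed in the ellipse obeying the reflection
law at each vertex. -/
structure Orbit3 (a b : ℝ) : Type where
  P1 : Pt
  P2 : Pt
  P3 : Pt
  h1 : onEllipse a b P1
  h2 : onEllipse a b P2
  h3 : onEllipse a b P3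
  d12 : P1 ≠ P2
  d23 : P2 ≠ P3
  d31 : P3 ≠ P1
  r1 : reflectAt a b P3 P1 P2
  r2 : reflectAt a b P1 P2 P3
  r3 : reflectAt a b P2 P3 P1

/-- Inversion of `p` with respect to the circle of radius `ρ` centered at `f`. -/
def inva (ρ : ℝ) (f p : Pt) : Pt :=
  f + (ρ ^ 2 / ((p.1 - f.1) ^ 2 + (p.2 - f.2) ^ 2)) • (p - f)

/-- Unsigned area of a triangle. -/
def area (A B C : Pt) : ℝ :=
  |(B.1 - A.1) * (C.2 - A.2) - (B.2 - A.2) * (C.1 - A.1)| / 2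

/-- The point with barycentric coordinates wA : wB : wC w.r.t. triangle ABC. -/
def bary (wA wB wC : ℝ) (A B C : Pt) : Pt :=
  (wA + wB + wC)⁻¹ • (wA • A + wB • B + wC • C)

/-- Side length a = |BC|. -/
def sA (A B C : Pt) : ℝ := dst B C
/-- Side length b = |CA|. -/
def sB (A B C : Pt) : ℝ := dst C A
/-- Side length c = |AB|. -/
def sC (A B C : Pt) : ℝ := dst A B

/-- Incenter X(1). -/
def incenter (A B C : Pt) : Pt := bary (sA A B C) (sB A B C) (sC A B C) A B C

/-- Barycenter (centroid) X(2). -/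
def centroid (A B C : Pt) : Pt := bary 1 1 1 A B C

/-- Circumcenter X(3), via its barycentric coordinates a²(b²+c²−a²) : · : ·. -/
def circumcenter (A B C : Pt) : Pt :=
  bary (sA A B C ^ 2 * (sB A B C ^ 2 + sC A B C ^ 2 - sA A B C ^ 2))
       (sB A B C ^ 2 * (sC A B C ^ 2 + sA A B C ^ 2 - sB A B C ^ 2))
       (sC A B C ^ 2 * (sA A B C ^ 2 + sB A B C ^ 2 - sC A B C ^ 2)) A B C

/-- Orthocenter X(4) = A + B + C − 2·(circumcenter). -/
def orthocenter (A B C : Pt) : Pt := A + B + C - (2 : ℝ) • circumcenter A B C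

/-- Nine-point center X(5): midpoint of circumcenter and orthocenter. -/
def ninePointCenter (A B C : Pt) : Pt :=
  ((1 : ℝ) / 2) • (circumcenter A B C + orthocenter A B C)

/-- Gergonne point X(7), barycentrics 1/(b+c−a) : 1/(c+a−b) : 1/(a+b−c). -/
def gergonne (A B C : Pt) : Pt :=
  bary (sB A B C + sC A B C - sA A B C)⁻¹
       (sC A B C + sA A B C - sB A B C)⁻¹
       (sA A B C + sB A B C - sC A B C)⁻¹ A B C

/-- Mittenpunkt X(9), barycentrics a(b+c−a) : b(c+a−b) : c(a+b−c). -/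
def mittenpunkt (A B C : Pt) : Pt :=
  bary (sA A B C * (sB A B C + sC A B C - sA A B C))
       (sB A B C * (sC A B C + sA A B C - sB A B C))
       (sC A B C * (sA A B C + sB A B C - sC A B C)) A B C

/-- Feuerbach point X(11), barycentrics (b+c−a)(b−c)² : · : ·. -/
def feuerbach (A B C : Pt) : Pt :=
  bary ((sB A B C + sC A B C - sA A B C) * (sB A B C - sC A B C) ^ 2)
       ((sC A B C + sA A B C - sB A B C) * (sC A B C - sA A B C) ^ 2)
       ((sA A B C + sB A B C - sC A B C) * (sA A B C - sB A B C) ^ 2) A B C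

/-- Triangle center X(100), barycentrics a/(b−c) : b/(c−a) : c/(a−b). -/
def X100 (A B C : Pt) : Pt :=
  bary (sA A B C / (sB A B C - sC A B C))
       (sB A B C / (sC A B C - sA A B C))
       (sC A B C / (sA A B C - sB A B C)) A B C

/-- Orthogonal projection of `Q` onto the line through `A` and `B`. -/
def projLine (Q A B : Pt) : Pt :=
  A + (dot (Q - A) (B - A) / dot (B - A) (B - A)) • (B - A)

/-- Unsigned area of the pedal triangle of `Q` w.r.t. triangle `A B C`. -/
def pedalArea (Q A B C : Pt) : ℝ :=
  area (projLine Q A B) (projLine Q B C) (projLine Q C A)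

/-- Sixteen times the squared area of a triangle with squared side lengths `x`, `y`, `z`. -/
def heron (x y z : ℝ) : ℝ := 2 * (x * y + y * z + z * x) - x ^ 2 - y ^ 2 - z ^ 2

lemma heron_mul (c x y z : ℝ) : heron (c * x) (c * y) (c * z) = c ^ 2 * heron x y z := by
  unfold heron; ring

lemma heron_mul_sq_eq_zero (c : ℝ) {X Y Z : ℝ} (h : X + Y + Z = 0) :
    heron (c * X ^ 2) (c * Y ^ 2) (c * Z ^ 2) = 0 := by
  rw [heron_mul, eq_neg_of_add_eq_zero_right h]
  unfold heron; ring

lemma heron_sq_sub_mul_eq {J x y z : ℝ} (hK : heron x y z = 2 * J * (x * y * z)) (t : ℝ) :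
    heron (x ^ 2 - t * (2 * J * x)) (y ^ 2 - t * (2 * J * y)) (z ^ 2 - t * (2 * J * z)) =
      2 * (x * y * z) * (J * (x + y + z) ^ 2 - 4 * (x + y + z)
        - 4 * t * J * (J * (x + y + z) - 3) + 4 * t ^ 2 * J ^ 3) := by
  unfold heron at hK ⊢
  linear_combination (x + y + z - 2 * t * J) ^ 2 * hK

lemma joachimsthal_quartic_of_heron {a b J x y z : ℝ} (hab : a ^ 2 ≠ b ^ 2) (hJ : J ≠ 0)
    (hxyz : x * y * z ≠ 0)
    (hcirc : heron (2 * J * x) (2 * J * y) (2 * J * z) = 2 * J * x * (2 * J * y) * (2 * J * z))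
    (hfst : heron (x ^ 2 - b ^ 2 * (2 * J * x)) (y ^ 2 - b ^ 2 * (2 * J * y))
      (z ^ 2 - b ^ 2 * (2 * J * z)) = 0)
    (hsnd : heron (x ^ 2 - a ^ 2 * (2 * J * x)) (y ^ 2 - a ^ 2 * (2 * J * y))
      (z ^ 2 - a ^ 2 * (2 * J * z)) = 0) :
    (a ^ 2 - b ^ 2) ^ 2 * J ^ 4 + 2 * (a ^ 2 + b ^ 2) * J ^ 2 - 3 = 0 := by
  set s := x + y + z
  have hK : heron x y z = 2 * J * (x * y * z) := by
    refine mul_left_cancel₀ (pow_ne_zero 2 (mul_ne_zero two_ne_zero hJ)) ?_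
    rw [← heron_mul, hcirc]
    ring
  rw [heron_sq_sub_mul_eq hK] at hfst hsnd
  replace hfst := (mul_eq_zero.mp hfst).resolve_left (mul_ne_zero two_ne_zero hxyz)
  replace hsnd := (mul_eq_zero.mp hsnd).resolve_left (mul_ne_zero two_ne_zero hxyz)
  have hperimeter : J * s - 3 = (a ^ 2 + b ^ 2) * J ^ 2 := by
    refine mul_left_cancel₀ (mul_ne_zero (sub_ne_zero.mpr hab) hJ) ?_
    linear_combination (hfst - hsnd) / 4
  have harea : J * s ^ 2 - 4 * s = 4 * a ^ 2 * b ^ 2 * J ^ 3 := by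
    refine mul_left_cancel₀ (sub_ne_zero.mpr hab) ?_
    linear_combination a ^ 2 * hfst - b ^ 2 * hsnd
  linear_combination J * harea - (J * s + (a ^ 2 + b ^ 2) * J ^ 2 - 1) * hperimeter

lemma sqrt_formula_eq_of_quartic {a b J : ℝ} (hab : b ^ 2 < a ^ 2) (hJ : 0 < J)
    (h : (a ^ 2 - b ^ 2) ^ 2 * J ^ 4 + 2 * (a ^ 2 + b ^ 2) * J ^ 2 - 3 = 0) :
    √(2 * √(a ^ 4 - a ^ 2 * b ^ 2 + b ^ 4) - a ^ 2 - b ^ 2) / (a ^ 2 - b ^ 2) = J := by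
  have hc : 0 < a ^ 2 - b ^ 2 := sub_pos.mpr hab
  have hδ : √(a ^ 4 - a ^ 2 * b ^ 2 + b ^ 4)
      = ((a ^ 2 - b ^ 2) ^ 2 * J ^ 2 + a ^ 2 + b ^ 2) / 2 := by
    rw [Real.sqrt_eq_iff_mul_self_eq_of_pos (by positivity)]
    linear_combination (a ^ 2 - b ^ 2) ^ 2 / 4 * h
  rw [hδ, show 2 * (((a ^ 2 - b ^ 2) ^ 2 * J ^ 2 + a ^ 2 + b ^ 2) / 2) - a ^ 2 - b ^ 2
      = ((a ^ 2 - b ^ 2) * J) ^ 2 by ring, Real.sqrt_sq (by positivity),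
    mul_div_cancel_left₀ J hc.ne']

def bform (a b : ℝ) (u v : Pt) : ℝ := u.1 * v.1 / a ^ 2 + u.2 * v.2 / b ^ 2

def joachimsthalConst (a b : ℝ) (p q : Pt) : ℝ := bform a b (q - p) (q - p) / (2 * dst p q)

section Ellipse

variable {a b : ℝ}

lemma bform_comm (u v : Pt) : bform a b u v = bform a b v u := by
  unfold bform; ring

lemma dot_nrm (p w : Pt) : dot (nrm a b p) w = bform a b p w := by
  unfold dot nrm bform; ring

lemma onEllipse_iff_bform_self {p : Pt} : onEllipse a b p ↔ bform a b p p = 1 := by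
  unfold onEllipse bform; ring_nf

lemma bform_sub_self_of_onEllipse {p q : Pt} (hp : onEllipse a b p) (hq : onEllipse a b q) :
    bform a b (q - p) (q - p) = 2 - 2 * bform a b p q := by
  rw [onEllipse_iff_bform_self] at hp hq
  unfold bform at *
  simp only [Prod.fst_sub, Prod.snd_sub]
  linear_combination hp + hq

lemma bform_self_pos (ha : a ≠ 0) (hb : b ≠ 0) {u : Pt} (hu : u ≠ 0) : 0 < bform a b u u := by
  have hform : bform a b u u = u.1 ^ 2 / a ^ 2 + u.2 ^ 2 / b ^ 2 := by unfold bform; ring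
  rw [hform]
  obtain hx | hy : u.1 ≠ 0 ∨ u.2 ≠ 0 := by
    by_contra! h
    exact hu (Prod.ext h.1 h.2)
  · exact add_pos_of_pos_of_nonneg (by positivity) (by positivity)
  · exact add_pos_of_nonneg_of_pos (by positivity) (by positivity)

lemma dot_comm (p q : Pt) : dot p q = dot q p := by
  unfold dot; ring

lemma dst_comm (p q : Pt) : dst p q = dst q p := by
  unfold dst; ring_nf

lemma dst_sq (p q : Pt) : dst p q ^ 2 = (p.1 - q.1) ^ 2 + (p.2 - q.2) ^ 2 :=
  Real.sq_sqrt (by positivity)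

lemma dst_pos {p q : Pt} (h : p ≠ q) : 0 < dst p q := by
  refine Real.sqrt_pos.mpr (lt_of_le_of_ne (by positivity) fun h0 => h ?_)
  have h1 : p.1 - q.1 = 0 := by nlinarith [sq_nonneg (p.1 - q.1), sq_nonneg (p.2 - q.2)]
  have h2 : p.2 - q.2 = 0 := by nlinarith [sq_nonneg (p.1 - q.1), sq_nonneg (p.2 - q.2)]
  exact Prod.ext (sub_eq_zero.mp h1) (sub_eq_zero.mp h2)

lemma joachimsthalConst_comm (p q : Pt) :
    joachimsthalConst a b p q = joachimsthalConst a b q p := by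
  unfold joachimsthalConst bform
  rw [dst_comm]
  simp only [Prod.fst_sub, Prod.snd_sub]
  ring

lemma joachimsthalConst_pos (ha : a ≠ 0) (hb : b ≠ 0) {p q : Pt} (h : p ≠ q) :
    0 < joachimsthalConst a b p q :=
  div_pos (bform_self_pos ha hb (sub_ne_zero.mpr h.symm)) (by linarith [dst_pos h])

lemma bform_sub_self_eq {p q : Pt} (h : p ≠ q) :
    bform a b (q - p) (q - p) = 2 * joachimsthalConst a b p q * dst p q := by
  unfold joachimsthalConst
  field_simp [(dst_pos h).ne']

lemma dot_nrm_udir_of_onEllipse {p q : Pt} (hp : onEllipse a b p) (hq : onEllipse a b q) :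
    dot (nrm a b p) (udir p q) = -joachimsthalConst a b p q := by
  have hpp := onEllipse_iff_bform_self.mp hp
  rw [dot_nrm, joachimsthalConst, bform_sub_self_of_onEllipse hp hq]
  unfold udir bform at *
  simp only [Prod.smul_fst, Prod.smul_snd, Prod.fst_sub, Prod.snd_sub, smul_eq_mul]
  linear_combination -(dst p q)⁻¹ * hpp

lemma joachimsthalConst_eq_of_reflectAt {q v r : Pt} (hq : onEllipse a b q)
    (hv : onEllipse a b v) (hr : onEllipse a b r) (h : reflectAt a b q v r) :
    joachimsthalConst a b q v = joachimsthalConst a b v r := by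
  unfold reflectAt at h
  rw [dot_comm, dot_comm (udir v r), dot_nrm_udir_of_onEllipse hv hq,
    dot_nrm_udir_of_onEllipse hv hr, neg_inj, joachimsthalConst_comm] at h
  exact h

end Ellipse

section Relations

variable {a b : ℝ}

lemma bform_gram_det_eq_zero (u v w : Pt) :
    !![bform a b u u, bform a b u v, bform a b u w;
      bform a b v u, bform a b v v, bform a b v w;
      bform a b w u, bform a b w v, bform a b w w].det = 0 := by
  simp only [Matrix.det_fin_three, Matrix.of_apply, Matrix.cons_val', Matrix.cons_val_zero,
    Matrix.cons_val_fin_one, Matrix.cons_val_one, Matrix.cons_val, bform]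
  ring

/-- On the unit circle of `bform` this is `abc = 4R · area` with `R = 1`. -/
lemma heron_bform_of_onEllipse {p₁ p₂ p₃ : Pt} (h₁ : onEllipse a b p₁) (h₂ : onEllipse a b p₂)
    (h₃ : onEllipse a b p₃) :
    heron (bform a b (p₂ - p₁) (p₂ - p₁)) (bform a b (p₃ - p₂) (p₃ - p₂))
        (bform a b (p₁ - p₃) (p₁ - p₃)) =
      bform a b (p₂ - p₁) (p₂ - p₁) * bform a b (p₃ - p₂) (p₃ - p₂) *
        bform a b (p₁ - p₃) (p₁ - p₃) := by
  have hgram := bform_gram_det_eq_zero (a := a) (b := b) p₁ p₂ p₃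
  simp only [Matrix.det_fin_three, Matrix.of_apply, Matrix.cons_val', Matrix.cons_val_zero,
    Matrix.cons_val_fin_one, Matrix.cons_val_one, Matrix.cons_val] at hgram
  rw [onEllipse_iff_bform_self.mp h₁, onEllipse_iff_bform_self.mp h₂,
    onEllipse_iff_bform_self.mp h₃, bform_comm p₂ p₁, bform_comm p₃ p₁, bform_comm p₃ p₂] at hgram
  rw [bform_sub_self_of_onEllipse h₁ h₂, bform_sub_self_of_onEllipse h₂ h₃,
    bform_sub_self_of_onEllipse h₃ h₁, bform_comm p₃ p₁]
  unfold heron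
  linear_combination 4 * hgram

lemma dst_sq_sub_bform_eq_fst (hb : b ≠ 0) (p q : Pt) :
    dst p q ^ 2 - b ^ 2 * bform a b (q - p) (q - p) = (1 - b ^ 2 / a ^ 2) * (q.1 - p.1) ^ 2 := by
  rw [dst_sq]
  unfold bform
  simp only [Prod.fst_sub, Prod.snd_sub]
  field_simp
  ring

lemma dst_sq_sub_bform_eq_snd (ha : a ≠ 0) (p q : Pt) :
    dst p q ^ 2 - a ^ 2 * bform a b (q - p) (q - p) = (1 - a ^ 2 / b ^ 2) * (q.2 - p.2) ^ 2 := by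
  rw [dst_sq]
  unfold bform
  simp only [Prod.fst_sub, Prod.snd_sub]
  field_simp
  ring

lemma heron_dst_sq_sub_bform_fst (hb : b ≠ 0) (p₁ p₂ p₃ : Pt) :
    heron (dst p₁ p₂ ^ 2 - b ^ 2 * bform a b (p₂ - p₁) (p₂ - p₁))
      (dst p₂ p₃ ^ 2 - b ^ 2 * bform a b (p₃ - p₂) (p₃ - p₂))
      (dst p₃ p₁ ^ 2 - b ^ 2 * bform a b (p₁ - p₃) (p₁ - p₃)) = 0 := by
  rw [dst_sq_sub_bform_eq_fst hb, dst_sq_sub_bform_eq_fst hb, dst_sq_sub_bform_eq_fst hb]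
  exact heron_mul_sq_eq_zero _ (by ring)

lemma heron_dst_sq_sub_bform_snd (ha : a ≠ 0) (p₁ p₂ p₃ : Pt) :
    heron (dst p₁ p₂ ^ 2 - a ^ 2 * bform a b (p₂ - p₁) (p₂ - p₁))
      (dst p₂ p₃ ^ 2 - a ^ 2 * bform a b (p₃ - p₂) (p₃ - p₂))
      (dst p₃ p₁ ^ 2 - a ^ 2 * bform a b (p₁ - p₃) (p₁ - p₃)) = 0 := by
  rw [dst_sq_sub_bform_eq_snd ha, dst_sq_sub_bform_eq_snd ha, dst_sq_sub_bform_eq_snd ha]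
  exact heron_mul_sq_eq_zero _ (by ring)

end Relations

namespace Orbit3

variable {a b : ℝ} (T : Orbit3 a b)

lemma joachimsthalConst_eq₂₃ :
    joachimsthalConst a b T.P2 T.P3 = joachimsthalConst a b T.P1 T.P2 :=
  (joachimsthalConst_eq_of_reflectAt T.h1 T.h2 T.h3 T.r2).symm

lemma joachimsthalConst_eq₃₁ :
    joachimsthalConst a b T.P3 T.P1 = joachimsthalConst a b T.P1 T.P2 :=
  (joachimsthalConst_eq_of_reflectAt T.h2 T.h3 T.h1 T.r3).symm.trans T.joachimsthalConst_eq₂₃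

theorem joachimsthal_quartic (ha : a ≠ 0) (hb : b ≠ 0) (hab : a ^ 2 ≠ b ^ 2) :
    (a ^ 2 - b ^ 2) ^ 2 * joachimsthalConst a b T.P1 T.P2 ^ 4
      + 2 * (a ^ 2 + b ^ 2) * joachimsthalConst a b T.P1 T.P2 ^ 2 - 3 = 0 := by
  have h₁₂ := bform_sub_self_eq (a := a) (b := b) T.d12
  have h₂₃ := bform_sub_self_eq (a := a) (b := b) T.d23
  have h₃₁ := bform_sub_self_eq (a := a) (b := b) T.d31
  rw [T.joachimsthalConst_eq₂₃] at h₂₃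
  rw [T.joachimsthalConst_eq₃₁] at h₃₁
  have hcirc := heron_bform_of_onEllipse T.h1 T.h2 T.h3
  have hfst := heron_dst_sq_sub_bform_fst (a := a) hb T.P1 T.P2 T.P3
  have hsnd := heron_dst_sq_sub_bform_snd (b := b) ha T.P1 T.P2 T.P3
  rw [h₁₂, h₂₃, h₃₁] at hcirc hfst hsnd
  have hsides : dst T.P1 T.P2 * dst T.P2 T.P3 * dst T.P3 T.P1 ≠ 0 := by
    have := dst_pos T.d12; have := dst_pos T.d23; have := dst_pos T.d31; positivity
  exact joachimsthal_quartic_of_heron hab (joachimsthalConst_pos ha hb T.d12).ne' hsides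
    hcirc hfst hsnd

end Orbit3

end BilliardInv

open BilliardInv Real

/-- for 3-periodic billiard orbits, Joachimsthal's constant
J = (1/2)|∇f·v̂| (the same at every vertex, with v̂ the unit vector along the
outgoing side) equals √(2δ − a² − b²)/c². -/
theorem joachimsthal_constant_three_periodics (a b : ℝ) (hab : a > b) (hb : b > 0)
    (T : Orbit3 a b) :
    let δ : ℝ := Real.sqrt (a ^ 4 - a ^ 2 * b ^ 2 + b ^ 4)
    let J : ℝ := Real.sqrt (2 * δ - a ^ 2 - b ^ 2) / (a ^ 2 - b ^ 2)
    |dot (nrm a b T.P1) (udir T.P1 T.P2)| = J ∧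
    |dot (nrm a b T.P2) (udir T.P2 T.P3)| = J ∧
    |dot (nrm a b T.P3) (udir T.P3 T.P1)| = J := by
  intro δ J
  have ha : a ≠ 0 := (hb.trans hab).ne'
  have hsq : b ^ 2 < a ^ 2 := pow_lt_pow_left₀ hab hb.le two_ne_zero
  have hpos := joachimsthalConst_pos ha hb.ne' T.d12
  have hJ : J = joachimsthalConst a b T.P1 T.P2 :=
    sqrt_formula_eq_of_quartic hsq hpos (T.joachimsthal_quartic ha hb.ne' hsq.ne')
  rw [hJ, dot_nrm_udir_of_onEllipse T.h1 T.h2, dot_nrm_udir_of_onEllipse T.h2 T.h3,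
    dot_nrm_udir_of_onEllipse T.h3 T.h1, T.joachimsthalConst_eq₂₃, T.joachimsthalConst_eq₃₁,
    abs_neg, abs_of_pos hpos]
  exact ⟨rfl, rfl, rfl⟩
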